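/- arXiv:1703.01067 — 3 statements merged into one kernel-verified Lean document; each statement's English description precedes it below -/
import Mathlib

section
/- Let p : ℂ → ℝ be integrable with ∫ p = 1, and let r : ℂ × ℂ → ℝ be a nonnegative measurable kernel with ∫ r(α, β) dβ = 1 for all α (a classical channel on P-distributions). Define q(β) = ∫ p(α) r(α, β) dα. Then the negativity is monotone: C₋(q) ≤ C₋(p). -/
/-!
The negative part of an integral is at most the integral of the negative part, and for `r ≥ 0`
the negative part of `p a * r a b` is `max (-p a) 0 * r a b`. So the negative part of
`q b = ∫ p a * r a b da` is at most `∫ max (-p a) 0 * r a b da`. Integrating in `b` and swapping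
the integrals, the normalization `∫ r a b db = 1` turns the right-hand side into the negativity
of `p`.
-/

open MeasureTheory

/-- The negativity of a signed `P`-distribution density: total mass of its negative part. -/
noncomputable def negativity (p : ℂ → ℝ) : ℝ := ∫ x, max (-(p x)) 0

theorem max_neg_integral_le_integral_max_neg {α : Type*} [MeasurableSpace α] {μ : Measure α}
    {g : α → ℝ} (hg : Integrable (fun a => max (-(g a)) 0) μ) :
    max (-∫ a, g a ∂μ) 0 ≤ ∫ a, max (-(g a)) 0 ∂μ := by
  have h_nonneg : 0 ≤ ∫ a, max (-(g a)) 0 ∂μ := integral_nonneg fun a => le_max_right _ _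
  refine max_le ?_ h_nonneg
  by_cases hgi : Integrable g μ
  · rw [← integral_neg]
    exact integral_mono hgi.neg hg fun a => le_max_left _ _
  · rwa [integral_undef hgi, neg_zero]

section Kernel

variable {α β : Type*} [MeasurableSpace α] [MeasurableSpace β] {μ : Measure α} {ν : Measure β}
  {r : α → β → ℝ}

theorem integrable_prod_mul_kernel [SFinite ν]
    (hrm : AEStronglyMeasurable (Function.uncurry r) (μ.prod ν)) (hrnn : ∀ a b, 0 ≤ r a b)
    (hrn : ∀ a, ∫ b, r a b ∂ν = 1) {f : α → ℝ} (hf : Integrable f μ) :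
    Integrable (fun z : α × β => f z.1 * r z.1 z.2) (μ.prod ν) := by
  refine (integrable_prod_iff (f := fun z : α × β => f z.1 * r z.1 z.2)
    (hf.aestronglyMeasurable.comp_fst.mul hrm)).2
    ⟨ae_of_all _ fun a => (integrable_of_integral_eq_one (hrn a)).const_mul (f a), ?_⟩
  have h_slice : ∀ a, ∫ b, ‖f a * r a b‖ ∂ν = ‖f a‖ := fun a => by
    simp_rw [norm_mul, Real.norm_of_nonneg (hrnn a _)]
    rw [integral_const_mul, hrn a, mul_one]
  simpa only [h_slice] using hf.norm

theorem integral_integral_mul_kernel [SFinite μ] [SFinite ν]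
    (hrm : AEStronglyMeasurable (Function.uncurry r) (μ.prod ν)) (hrnn : ∀ a b, 0 ≤ r a b)
    (hrn : ∀ a, ∫ b, r a b ∂ν = 1) {f : α → ℝ} (hf : Integrable f μ) :
    ∫ b, ∫ a, f a * r a b ∂μ ∂ν = ∫ a, f a ∂μ := by
  rw [← integral_integral_swap (integrable_prod_mul_kernel hrm hrnn hrn hf)]
  simp_rw [integral_const_mul, hrn, mul_one]

theorem integral_max_neg_kernel_le [SFinite μ] [SFinite ν]
    (hrm : AEStronglyMeasurable (Function.uncurry r) (μ.prod ν)) (hrnn : ∀ a b, 0 ≤ r a b)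
    (hrn : ∀ a, ∫ b, r a b ∂ν = 1) {p : α → ℝ} (hp : Integrable p μ) :
    ∫ b, max (-∫ a, p a * r a b ∂μ) 0 ∂ν ≤ ∫ a, max (-(p a)) 0 ∂μ := by
  have h_neg : Integrable (fun a => max (-(p a)) 0) μ := hp.neg.pos_part
  have h_prod := integrable_prod_mul_kernel hrm hrnn hrn h_neg
  have h_pointwise : ∀ᵐ b ∂ν,
      max (-∫ a, p a * r a b ∂μ) 0 ≤ ∫ a, max (-(p a)) 0 * r a b ∂μ := by
    filter_upwards [h_prod.prod_left_ae] with b hb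
    have h_factor : ∀ a, max (-(p a * r a b)) 0 = max (-(p a)) 0 * r a b := fun a => by
      rw [max_mul_of_nonneg _ _ (hrnn a b), neg_mul, zero_mul]
    simp_rw [← h_factor] at hb ⊢
    exact max_neg_integral_le_integral_max_neg hb
  calc ∫ b, max (-∫ a, p a * r a b ∂μ) 0 ∂ν
      ≤ ∫ b, ∫ a, max (-(p a)) 0 * r a b ∂μ ∂ν :=
        integral_mono_of_nonneg (ae_of_all _ fun b => le_max_right _ _)
          h_prod.integral_prod_right h_pointwise
    _ = ∫ a, max (-(p a)) 0 ∂μ := integral_integral_mul_kernel hrm hrnn hrn h_neg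

end Kernel

theorem negativity_monotone_kernel_general (p : ℂ → ℝ) (hp : Integrable p)
    (r : ℂ → ℂ → ℝ) (hrm : Measurable (Function.uncurry r))
    (hrnn : ∀ a b, 0 ≤ r a b) (hrn : ∀ a, ∫ b, r a b = 1) :
    negativity (fun b => ∫ a, p a * r a b) ≤ negativity p :=
  integral_max_neg_kernel_le hrm.aestronglyMeasurable hrnn hrn hp

/-- Negativity is monotone under classical channels on `P`-distributions: pushing a signed
density through a nonnegative normalized kernel cannot increase the negativity. -/
theorem negativity_monotone_kernel (p : ℂ → ℝ) (hp : Integrable p) (hp1 : ∫ x, p x = 1)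
    (r : ℂ → ℂ → ℝ) (hrm : Measurable (Function.uncurry r))
    (hrnn : ∀ a b, 0 ≤ r a b) (hrn : ∀ a, ∫ b, r a b = 1) :
    negativity (fun b => ∫ a, p a * r a b) ≤ negativity p :=
  negativity_monotone_kernel_general p hp r hrm hrnn hrn
end

section
/- Let ρ and σ be density matrices on H_A ⊗ H_B such that σ = Σ_i p_i ρ_i ⊗ |b_i⟩⟨b_i| and ρ = Σ_i p_i τ_i ⊗ |b_i⟩⟨b_i| with {|b_i⟩} orthonormal in H_B. Then for the relative entropy of coherence C_r with respect to any product basis {|a_j⟩ ⊗ |b_i⟩}, C_r(Σ_i p_i τ_i ⊗ |b_i⟩⟨b_i|) = Σ_i p_i C_r(τ_i), where each C_r(τ_i) is measured in basis {|a_j⟩}. (Coherence is additive over orthogonal block-diagonal flags.) -/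
open Matrix
open scoped ComplexOrder

variable {n : Type*} [Fintype n] [DecidableEq n]

/-- The trace norm (sum of singular values) of a complex square matrix. -/
noncomputable def traceNorm (A : Matrix n n ℂ) : ℝ :=
  (((posSemidef_conjTranspose_mul_self A).1.eigenvectorUnitary.1 *
      diagonal (((↑) : ℝ → ℂ) ∘ (√·) ∘ (posSemidef_conjTranspose_mul_self A).1.eigenvalues) *
      (star (posSemidef_conjTranspose_mul_self A).1.eigenvectorUnitary : Matrix n n ℂ)).trace).re

/-- `A` is a density matrix: positive semidefinite with unit trace. -/
def IsDensityMatrix (A : Matrix n n ℂ) : Prop := A.PosSemidef ∧ A.trace = 1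

/-- `A` is incoherent (diagonal) in the fixed basis. -/
def Incoherent (A : Matrix n n ℂ) : Prop := ∀ i j, i ≠ j → A i j = 0

/-- The dephasing map, removing all off-diagonal entries. -/
def dephase (A : Matrix n n ℂ) : Matrix n n ℂ := Matrix.diagonal (fun i => A i i)

/-- The `l₁`-norm of coherence: sum of moduli of off-diagonal entries. -/
noncomputable def Cl1 (A : Matrix n n ℂ) : ℝ :=
  ∑ i, ∑ j, if i ≠ j then ‖A i j‖ else 0

/-- The von Neumann entropy `-Tr ρ log ρ` of a Hermitian matrix, via its eigenvalues
(junk value `0` on non-Hermitian matrices). -/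
noncomputable def vnEntropy (A : Matrix n n ℂ) : ℝ :=
  if h : A.IsHermitian then -∑ i, h.eigenvalues i * Real.log (h.eigenvalues i) else 0

/-- The relative entropy of coherence `C_r(ρ) = S(Δ(ρ)) - S(ρ)`. -/
noncomputable def Crel (A : Matrix n n ℂ) : ℝ := vnEntropy (dephase A) - vnEntropy A

/-!
In the product basis, `Σ_i p_i τ_i ⊗ |b_i⟩⟨b_i|` is the block-diagonal matrix with blocks
`p_i τ_i`, and dephasing acts block by block. Conjugating by the block-diagonal unitary built
from the eigenbases of the blocks shows that the spectrum of a block-diagonal Hermitian matrix is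
the union of the spectra of its blocks, so the von Neumann entropy is additive over blocks.
Scaling gives `S(c B) = c S(B) + η(c) tr B` with `η(x) = -x log x`; since dephasing preserves the
trace, the `η(p_i)` terms cancel in `S(Δ ρ) - S(ρ)`, leaving `Σ_i p_i C_r(τ_i)`.
-/

theorem Matrix.charpoly_unitary_conj {m α : Type*} [Fintype m] [DecidableEq m] [CommRing α]
    [StarRing α] (U : unitaryGroup m α) (B : Matrix m m α) :
    ((U : Matrix m m α) * B * star (U : Matrix m m α)).charpoly = B.charpoly := by
  rw [charpoly_mul_comm, ← mul_assoc, Unitary.star_mul_self_of_mem U.2, one_mul]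

theorem blockDiagonal_mem_unitaryGroup {m o α : Type*} [Fintype m] [DecidableEq m] [Fintype o]
    [DecidableEq o] [CommRing α] [StarRing α] {U : o → Matrix m m α}
    (hU : ∀ i, U i ∈ unitaryGroup m α) : blockDiagonal U ∈ unitaryGroup (m × o) α := by
  rw [mem_unitaryGroup_iff, star_eq_conjTranspose, blockDiagonal_conjTranspose,
    ← blockDiagonal_mul]
  simp_rw [← star_eq_conjTranspose, mem_unitaryGroup_iff.1 (hU _)]
  exact blockDiagonal_one

open Kronecker in
theorem sum_kronecker_single_self {l m o α : Type*} [Fintype o] [DecidableEq o]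
    [NonAssocSemiring α] (M : o → Matrix l m α) :
    ∑ i, M i ⊗ₖ single i i (1 : α) = blockDiagonal M := by
  ext ⟨x, i⟩ ⟨y, j⟩
  simp [Matrix.sum_apply, single_apply, blockDiagonal_apply, ite_and]

namespace Matrix.IsHermitian

variable {m 𝕜 : Type*} [Fintype m] [DecidableEq m] [RCLike 𝕜] {A : Matrix m m 𝕜}

theorem eq_unitary_conj_diagonal (hA : A.IsHermitian) :
    A = (hA.eigenvectorUnitary : Matrix m m 𝕜) * diagonal (fun i => (hA.eigenvalues i : 𝕜)) *
      star (hA.eigenvectorUnitary : Matrix m m 𝕜) :=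
  hA.spectral_theorem

open Polynomial in
theorem sum_comp_eigenvalues_of_charpoly_eq (hA : A.IsHermitian) {d : m → ℝ}
    (h : A.charpoly = ∏ i, (X - C (d i : 𝕜))) (f : ℝ → ℝ) :
    ∑ i, f (hA.eigenvalues i) = ∑ i, f (d i) := by
  have hroots := hA.roots_charpoly_eq_eigenvalues
  have hprod : ∏ i, (X - C (d i : 𝕜)) =
      ((Finset.univ.val.map fun i => (d i : 𝕜)).map fun z => X - C z).prod := by
    rw [Finset.prod_eq_multiset_prod, Multiset.map_map]; rfl
  rw [h, hprod, roots_multiset_prod_X_sub_C] at hroots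
  have hsum := congrArg (fun s => (s.map (f ∘ RCLike.re)).sum) hroots
  simp only [Multiset.map_map, Function.comp_def, RCLike.ofReal_re] at hsum
  rw [Finset.sum_eq_multiset_sum, Finset.sum_eq_multiset_sum]
  exact hsum.symm

end Matrix.IsHermitian

theorem Matrix.IsHermitian.dephase {m : Type*} [DecidableEq m] {A : Matrix m m ℂ}
    (hA : A.IsHermitian) : (dephase A).IsHermitian :=
  isHermitian_diagonal_iff.2 fun i => hA.apply i i

theorem trace_dephase (A : Matrix n n ℂ) : (dephase A).trace = A.trace :=
  trace_diagonal _

theorem dephase_blockDiagonal {m o : Type*} [DecidableEq m] [DecidableEq o]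
    (M : o → Matrix m m ℂ) :
    dephase (blockDiagonal M) = blockDiagonal fun i => dephase (M i) := by
  simp only [dephase, blockDiagonal_diagonal]
  exact congrArg diagonal (funext fun xi => blockDiagonal_apply_eq M xi.1 xi.1 xi.2)

theorem vnEntropy_eq_sum_negMulLog {A : Matrix n n ℂ} (hA : A.IsHermitian) :
    vnEntropy A = ∑ i, Real.negMulLog (hA.eigenvalues i) := by
  simp only [vnEntropy, dif_pos hA, Real.negMulLog, neg_mul, Finset.sum_neg_distrib]

theorem vnEntropy_unitary_conj_diagonal (U : unitaryGroup n ℂ) (d : n → ℝ) :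
    vnEntropy ((U : Matrix n n ℂ) * diagonal (fun i => (d i : ℂ)) * star (U : Matrix n n ℂ)) =
      ∑ i, Real.negMulLog (d i) := by
  have hA : ((U : Matrix n n ℂ) * diagonal (fun i => (d i : ℂ)) *
      star (U : Matrix n n ℂ)).IsHermitian :=
    isHermitian_mul_mul_conjTranspose _ (isHermitian_diagonal_iff.2 fun i => Complex.conj_ofReal _)
  rw [vnEntropy_eq_sum_negMulLog hA]
  exact hA.sum_comp_eigenvalues_of_charpoly_eq (by rw [charpoly_unitary_conj, charpoly_diagonal]; rfl) _

theorem vnEntropy_real_smul {B : Matrix n n ℂ} (hB : B.IsHermitian) (c : ℝ) :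
    vnEntropy ((c : ℂ) • B) = c * vnEntropy B + Real.negMulLog c * B.trace.re := by
  have hdiag : (fun i => ((c * hB.eigenvalues i : ℝ) : ℂ)) =
      (c : ℂ) • fun i => (hB.eigenvalues i : ℂ) := by
    ext; simp
  have hcB : (c : ℂ) • B = (hB.eigenvectorUnitary : Matrix n n ℂ) *
      diagonal (fun i => ((c * hB.eigenvalues i : ℝ) : ℂ)) *
      star (hB.eigenvectorUnitary : Matrix n n ℂ) := by
    rw [hdiag, diagonal_smul, mul_smul_comm, smul_mul_assoc]
    exact congrArg _ hB.eq_unitary_conj_diagonal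
  rw [hcB, vnEntropy_unitary_conj_diagonal, vnEntropy_eq_sum_negMulLog hB,
    hB.trace_eq_sum_eigenvalues]
  simp only [Real.negMulLog_mul, Finset.sum_add_distrib, Complex.re_sum, Finset.mul_sum]
  rw [add_comm]
  congr 1
  exact Finset.sum_congr rfl fun i _ => mul_comm _ _

theorem Crel_real_smul {B : Matrix n n ℂ} (hB : B.IsHermitian) (c : ℝ) :
    Crel ((c : ℂ) • B) = c * Crel B := by
  have hdephase : dephase ((c : ℂ) • B) = (c : ℂ) • dephase B := by
    rw [dephase, dephase, ← diagonal_smul]; rfl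
  rw [Crel, Crel, hdephase, vnEntropy_real_smul hB.dephase, vnEntropy_real_smul hB,
    trace_dephase]
  ring

section BlockDiagonal

variable {o : Type*} [Fintype o] [DecidableEq o]

theorem vnEntropy_blockDiagonal {M : o → Matrix n n ℂ} (hM : ∀ i, (M i).IsHermitian) :
    vnEntropy (blockDiagonal M) = ∑ i, vnEntropy (M i) := by
  let U : unitaryGroup (n × o) ℂ :=
    ⟨blockDiagonal fun i => ((hM i).eigenvectorUnitary : Matrix n n ℂ),
      blockDiagonal_mem_unitaryGroup fun i => (hM i).eigenvectorUnitary.2⟩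
  have hblock : blockDiagonal M = (U : Matrix (n × o) (n × o) ℂ) *
      diagonal (fun xi => ((hM xi.2).eigenvalues xi.1 : ℂ)) *
      star (U : Matrix (n × o) (n × o) ℂ) :=
    calc blockDiagonal M = blockDiagonal fun i =>
          ((hM i).eigenvectorUnitary : Matrix n n ℂ) *
            diagonal (fun x => ((hM i).eigenvalues x : ℂ)) *
            star ((hM i).eigenvectorUnitary : Matrix n n ℂ) :=
          congrArg blockDiagonal (funext fun i => (hM i).eq_unitary_conj_diagonal)
      _ = _ := by
          simp only [blockDiagonal_mul, blockDiagonal_diagonal, U, star_eq_conjTranspose,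
            blockDiagonal_conjTranspose]
  rw [hblock, vnEntropy_unitary_conj_diagonal, Fintype.sum_prod_type_right]
  exact Finset.sum_congr rfl fun i _ => (vnEntropy_eq_sum_negMulLog (hM i)).symm

theorem Crel_blockDiagonal {M : o → Matrix n n ℂ} (hM : ∀ i, (M i).IsHermitian) :
    Crel (blockDiagonal M) = ∑ i, Crel (M i) := by
  rw [Crel, dephase_blockDiagonal, vnEntropy_blockDiagonal (fun i => (hM i).dephase),
    vnEntropy_blockDiagonal hM, ← Finset.sum_sub_distrib]
  rfl

end BlockDiagonal

open Kronecker in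
theorem Crel_flag_additivity_general {a m : ℕ} (p : Fin m → ℝ) (τ : Fin m → Matrix (Fin a) (Fin a) ℂ)
    (hτ : ∀ i, IsDensityMatrix (τ i)) :
    Crel (∑ i, (p i : ℂ) • (τ i ⊗ₖ Matrix.single i i (1 : ℂ))) =
      ∑ i, p i * Crel (τ i) := by
  have hτH : ∀ i, (τ i).IsHermitian := fun i => (hτ i).1.1
  simp_rw [← smul_kronecker]
  rw [sum_kronecker_single_self,
    Crel_blockDiagonal fun i => (hτH i).smul (Complex.conj_ofReal (p i))]
  exact Finset.sum_congr rfl fun i _ => Crel_real_smul (hτH i) (p i)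

open Kronecker in
/-- Flag-additivity of the relative entropy of coherence: for a block-diagonal state
`Σ_i p_i τ_i ⊗ |b_i⟩⟨b_i|` with orthonormal flags `|b_i⟩`, the coherence in the product
basis is the average of the coherences of the blocks. -/
theorem Crel_flag_additivity {a m : ℕ} (p : Fin m → ℝ) (hp0 : ∀ i, 0 ≤ p i)
    (hp1 : ∑ i, p i = 1) (τ : Fin m → Matrix (Fin a) (Fin a) ℂ)
    (hτ : ∀ i, IsDensityMatrix (τ i)) :
    Crel (∑ i, (p i : ℂ) • (τ i ⊗ₖ Matrix.single i i (1 : ℂ))) =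
      ∑ i, p i * Crel (τ i) :=
  Crel_flag_additivity_general p τ hτ
end

section
/- Let H be a separable Hilbert space and (ρ_n) a sequence of density operators (positive trace-class, trace 1) converging weakly to a density operator ρ (i.e., Tr(ρ_n A) → Tr(ρ A) for every bounded operator A, or equivalently ⟨ψ|ρ_n|φ⟩ → ⟨ψ|ρ|φ⟩ for all ψ, φ). Then ρ_n → ρ in trace norm. -/
/-!
Write a density operator as `σ = A† A`. The trace condition says `∑ ‖A b_j‖² = 1`, so by Bessel's
inequality applied to the vectors `A† b_j`, `∑ ‖A g_i‖² ≤ 1` for every orthonormal family `g`;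
likewise, if `P` projects onto the span of `b_j`, `j ∈ s`, then `∑ ‖A (1 - P) g_i‖²` is at most
the tail `1 - ∑_{j ∈ s} ⟪b_j, σ b_j⟫`. Split `⟪e, (σ - τ) f⟫` into `⟪P e, (σ - τ) P f⟫` and
terms containing `1 - P`. Since `|⟪x, σ y⟫| ≤ ‖A x‖ ‖A y‖`, Cauchy–Schwarz bounds every sum
`∑ |⟪e_i, (σ - τ) f_i⟫|` by the finitely many matrix entries `|⟪b_a, (σ - τ) b_c⟫|`, `a, c ∈ s`,
plus twice the square roots of the tails of `σ` and `τ`. Under weak convergence the matrix entries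
and the tails of `ρ_n` converge, and the tail of `ρ` tends to `0` as `s` grows.
-/

open scoped InnerProductSpace

variable {H : Type*} [NormedAddCommGroup H] [InnerProductSpace ℂ H] [CompleteSpace H]

/-- The trace norm of an operator, as the supremum of `Σ |⟨e_i, T f_i⟩|` over finite
orthonormal families `(e_i)`, `(f_i)`. -/
noncomputable def opTraceNorm (T : H →L[ℂ] H) : ℝ :=
  sSup {s : ℝ | ∃ (n : ℕ) (e f : Fin n → H), Orthonormal ℂ e ∧ Orthonormal ℂ f ∧
    s = ∑ i, ‖(inner ℂ (e i) (T (f i)) : ℂ)‖}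

/-- The trace of an operator with respect to a Hilbert basis. -/
noncomputable def opTrace (b : HilbertBasis ℕ ℂ H) (T : H →L[ℂ] H) : ℝ :=
  ∑' n : ℕ, (inner ℂ (b n) (T (b n)) : ℂ).re

open Filter Topology

section InnerProductSpace

variable {𝕜 E : Type*} [RCLike 𝕜] [NormedAddCommGroup E] [InnerProductSpace 𝕜 E]

theorem enorm_inner_symm (x y : E) : ‖⟪x, y⟫_𝕜‖ₑ = ‖⟪y, x⟫_𝕜‖ₑ := by
  simp only [← ofReal_norm, norm_inner_symm]

theorem Orthonormal.sum_enorm_inner_sq_le {κ : Type*} {v : κ → E} (hv : Orthonormal 𝕜 v)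
    (s : Finset κ) (x : E) : ∑ i ∈ s, ‖⟪v i, x⟫_𝕜‖ₑ ^ 2 ≤ ‖x‖ₑ ^ 2 := by
  simp only [← ofReal_norm, ← ENNReal.ofReal_pow (norm_nonneg _)]
  rw [← ENNReal.ofReal_sum_of_nonneg (fun _ _ => by positivity)]
  exact ENNReal.ofReal_le_ofReal (hv.sum_inner_products_le x)

theorem Orthonormal.sum_norm_inner_mul_norm_inner_le {κ : Type*} {e f : κ → E}
    (he : Orthonormal 𝕜 e) (hf : Orthonormal 𝕜 f) (s : Finset κ) (u v : E) :
    ∑ i ∈ s, ‖⟪u, e i⟫_𝕜‖ * ‖⟪v, f i⟫_𝕜‖ ≤ ‖u‖ * ‖v‖ := by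
  have bessel {g : κ → E} (hg : Orthonormal 𝕜 g) (w : E) : √(∑ i ∈ s, ‖⟪w, g i⟫_𝕜‖ ^ 2) ≤ ‖w‖ := by
    simp only [norm_inner_symm w]
    exact (Real.sqrt_le_sqrt (hg.sum_inner_products_le w)).trans_eq (Real.sqrt_sq (norm_nonneg w))
  exact (Real.sum_mul_le_sqrt_mul_sqrt s _ _).trans
    (mul_le_mul (bessel he u) (bessel hf v) (Real.sqrt_nonneg _) (norm_nonneg u))

theorem ContinuousLinearMap.sum_norm_inner_adjoint_comp_self_le [CompleteSpace E]
    (A : E →L[𝕜] E) {κ : Type*} (x y : κ → E) (t : Finset κ) :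
    ∑ i ∈ t, ‖⟪x i, (A.adjoint ∘L A) (y i)⟫_𝕜‖
      ≤ √(∑ i ∈ t, ‖A (x i)‖ ^ 2) * √(∑ i ∈ t, ‖A (y i)‖ ^ 2) := by
  simp only [ContinuousLinearMap.comp_apply, ContinuousLinearMap.adjoint_inner_right]
  exact (Finset.sum_le_sum fun i _ => norm_inner_le_norm _ _).trans
    (Real.sum_mul_le_sqrt_mul_sqrt t _ _)

end InnerProductSpace

namespace HilbertBasis

variable {ι 𝕜 E : Type*} [RCLike 𝕜] [NormedAddCommGroup E] [InnerProductSpace 𝕜 E]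

theorem tsum_enorm_inner_sq (b : HilbertBasis ι 𝕜 E) (x : E) :
    ∑' i, ‖⟪b i, x⟫_𝕜‖ₑ ^ 2 = ‖x‖ₑ ^ 2 := by
  have h := lp.hasSum_norm (p := 2) (by norm_num) (b.repr x)
  simp only [b.repr_apply_apply, LinearIsometryEquiv.norm_map, ENNReal.toReal_ofNat,
    Real.rpow_two] at h
  simp only [← ofReal_norm, ← ENNReal.ofReal_pow (norm_nonneg _)]
  rw [← ENNReal.ofReal_tsum_of_nonneg (fun _ => by positivity) h.summable, h.tsum_eq]

noncomputable def finsetProj (b : HilbertBasis ι 𝕜 E) (s : Finset ι) : E →L[𝕜] E :=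
  ∑ i ∈ s, (innerSL 𝕜 (b i)).smulRight (b i)

theorem finsetProj_apply (b : HilbertBasis ι 𝕜 E) (s : Finset ι) (x : E) :
    b.finsetProj s x = ∑ i ∈ s, ⟪b i, x⟫_𝕜 • b i := by
  simp [finsetProj]

theorem finsetProj_apply_of_mem (b : HilbertBasis ι 𝕜 E) {s : Finset ι} {j : ι} (hj : j ∈ s) :
    b.finsetProj s (b j) = b j := by
  classical
  simp [finsetProj_apply, orthonormal_iff_ite.1 b.orthonormal, hj]

theorem finsetProj_apply_of_notMem (b : HilbertBasis ι 𝕜 E) {s : Finset ι} {j : ι} (hj : j ∉ s) :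
    b.finsetProj s (b j) = 0 := by
  classical
  simp [finsetProj_apply, orthonormal_iff_ite.1 b.orthonormal, hj]

theorem hasSum_norm_comp_finsetProj_sq (b : HilbertBasis ι 𝕜 E) (A : E →L[𝕜] E)
    (s : Finset ι) :
    HasSum (fun j => ‖(A ∘L b.finsetProj s) (b j)‖ ^ 2) (∑ j ∈ s, ‖A (b j)‖ ^ 2) := by
  have h : HasSum (fun j => ‖(A ∘L b.finsetProj s) (b j)‖ ^ 2)
      (∑ j ∈ s, ‖(A ∘L b.finsetProj s) (b j)‖ ^ 2) :=
    hasSum_sum_of_ne_finset_zero fun j hj => by simp [b.finsetProj_apply_of_notMem hj]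
  convert h using 1
  exact Finset.sum_congr rfl fun j hj => by simp [b.finsetProj_apply_of_mem hj]

theorem hasSum_norm_comp_one_sub_finsetProj_sq (b : HilbertBasis ι 𝕜 E) {A : E →L[𝕜] E}
    {c : ℝ} (hA : HasSum (fun j => ‖A (b j)‖ ^ 2) c) (s : Finset ι) :
    HasSum (fun j => ‖(A ∘L (1 - b.finsetProj s)) (b j)‖ ^ 2) (c - ∑ j ∈ s, ‖A (b j)‖ ^ 2) := by
  refine (hA.sub (b.hasSum_norm_comp_finsetProj_sq A s)).congr_fun fun j => ?_
  by_cases hj : j ∈ s <;>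
    simp [b.finsetProj_apply_of_mem, b.finsetProj_apply_of_notMem, hj]

theorem norm_inner_finsetProj_le (b : HilbertBasis ι 𝕜 E) (T : E →L[𝕜] E) (s : Finset ι)
    (x y : E) :
    ‖⟪b.finsetProj s x, T (b.finsetProj s y)⟫_𝕜‖
      ≤ ∑ a ∈ s, ∑ c ∈ s, ‖⟪b a, x⟫_𝕜‖ * ‖⟪b c, y⟫_𝕜‖ * ‖⟪b a, T (b c)⟫_𝕜‖ := by
  rw [finsetProj_apply, finsetProj_apply, sum_inner]
  refine (norm_sum_le _ _).trans (Finset.sum_le_sum fun a _ => ?_)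
  simp only [map_sum, map_smul, inner_smul_left, inner_sum, inner_smul_right]
  refine (norm_sum_le _ _).trans_eq (Finset.sum_congr rfl fun c _ => ?_)
  simp only [norm_mul, RCLike.norm_conj]
  ring

theorem sum_norm_inner_finsetProj_le (b : HilbertBasis ι 𝕜 E) (T : E →L[𝕜] E) (s : Finset ι)
    {κ : Type*} {e f : κ → E} (he : Orthonormal 𝕜 e) (hf : Orthonormal 𝕜 f) (t : Finset κ) :
    ∑ i ∈ t, ‖⟪b.finsetProj s (e i), T (b.finsetProj s (f i))⟫_𝕜‖
      ≤ ∑ a ∈ s, ∑ c ∈ s, ‖⟪b a, T (b c)⟫_𝕜‖ :=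
  calc ∑ i ∈ t, ‖⟪b.finsetProj s (e i), T (b.finsetProj s (f i))⟫_𝕜‖
      ≤ ∑ i ∈ t, ∑ a ∈ s, ∑ c ∈ s, ‖⟪b a, e i⟫_𝕜‖ * ‖⟪b c, f i⟫_𝕜‖ * ‖⟪b a, T (b c)⟫_𝕜‖ :=
        Finset.sum_le_sum fun i _ => b.norm_inner_finsetProj_le T s _ _
    _ = ∑ a ∈ s, ∑ c ∈ s, (∑ i ∈ t, ‖⟪b a, e i⟫_𝕜‖ * ‖⟪b c, f i⟫_𝕜‖) * ‖⟪b a, T (b c)⟫_𝕜‖ := by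
        simp only [Finset.sum_mul]
        rw [Finset.sum_comm]
        exact Finset.sum_congr rfl fun _ _ => Finset.sum_comm
    _ ≤ ∑ a ∈ s, ∑ c ∈ s, 1 * ‖⟪b a, T (b c)⟫_𝕜‖ := by
        gcongr with a _ c _
        simpa [b.orthonormal.1] using he.sum_norm_inner_mul_norm_inner_le hf t (b a) (b c)
    _ = ∑ a ∈ s, ∑ c ∈ s, ‖⟪b a, T (b c)⟫_𝕜‖ := by simp only [one_mul]

variable [CompleteSpace E]

theorem tsum_enorm_adjoint_apply_sq (b : HilbertBasis ι 𝕜 E) (A : E →L[𝕜] E) :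
    ∑' j, ‖A.adjoint (b j)‖ₑ ^ 2 = ∑' j, ‖A (b j)‖ₑ ^ 2 := by
  simp only [← b.tsum_enorm_inner_sq (A.adjoint _), ← b.tsum_enorm_inner_sq (A _)]
  rw [ENNReal.tsum_comm]
  simp only [ContinuousLinearMap.adjoint_inner_right]
  exact tsum_congr fun _ => tsum_congr fun _ => by rw [enorm_inner_symm]

theorem sum_enorm_apply_sq_le (b : HilbertBasis ι 𝕜 E) (A : E →L[𝕜] E) {κ : Type*}
    {g : κ → E} (hg : Orthonormal 𝕜 g) (s : Finset κ) :
    ∑ i ∈ s, ‖A (g i)‖ₑ ^ 2 ≤ ∑' j, ‖A (b j)‖ₑ ^ 2 :=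
  calc ∑ i ∈ s, ‖A (g i)‖ₑ ^ 2
      = ∑' j, ∑ i ∈ s, ‖⟪g i, A.adjoint (b j)⟫_𝕜‖ₑ ^ 2 := by
        simp only [← b.tsum_enorm_inner_sq (A _), ContinuousLinearMap.adjoint_inner_right]
        rw [← Summable.tsum_finsetSum fun _ _ => ENNReal.summable]
        exact tsum_congr fun _ => Finset.sum_congr rfl fun _ _ => by rw [enorm_inner_symm]
    _ ≤ ∑' j, ‖A.adjoint (b j)‖ₑ ^ 2 := ENNReal.tsum_le_tsum fun j => hg.sum_enorm_inner_sq_le s _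
    _ = ∑' j, ‖A (b j)‖ₑ ^ 2 := b.tsum_enorm_adjoint_apply_sq A

theorem sum_norm_apply_sq_le_of_hasSum (b : HilbertBasis ι 𝕜 E) (A : E →L[𝕜] E) {κ : Type*}
    {g : κ → E} (hg : Orthonormal 𝕜 g) (s : Finset κ) {c : ℝ}
    (hA : HasSum (fun j => ‖A (b j)‖ ^ 2) c) : ∑ i ∈ s, ‖A (g i)‖ ^ 2 ≤ c := by
  rw [← ENNReal.ofReal_le_ofReal_iff (hA.nonneg fun _ => by positivity), ← hA.tsum_eq,
    ENNReal.ofReal_sum_of_nonneg (fun _ _ => by positivity),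
    ENNReal.ofReal_tsum_of_nonneg (fun _ => by positivity) hA.summable]
  simp only [ENNReal.ofReal_pow (norm_nonneg _), ofReal_norm]
  exact b.sum_enorm_apply_sq_le A hg s

theorem sum_norm_inner_offBlock_le (b : HilbertBasis ι 𝕜 E) {A : E →L[𝕜] E}
    (hA : HasSum (fun j => ‖A (b j)‖ ^ 2) 1) (s : Finset ι) {κ : Type*} {e f : κ → E}
    (he : Orthonormal 𝕜 e) (hf : Orthonormal 𝕜 f) (t : Finset κ) :
    ∑ i ∈ t, ‖⟪(1 - b.finsetProj s) (e i), (A.adjoint ∘L A) (b.finsetProj s (f i))⟫_𝕜‖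
      + ∑ i ∈ t, ‖⟪e i, (A.adjoint ∘L A) ((1 - b.finsetProj s) (f i))⟫_𝕜‖
      ≤ 2 * √(1 - ∑ j ∈ s, ‖A (b j)‖ ^ 2) := by
  have hQ {g : κ → E} (hg : Orthonormal 𝕜 g) :
      ∑ i ∈ t, ‖A ((1 - b.finsetProj s) (g i))‖ ^ 2 ≤ 1 - ∑ j ∈ s, ‖A (b j)‖ ^ 2 :=
    b.sum_norm_apply_sq_le_of_hasSum _ hg t (b.hasSum_norm_comp_one_sub_finsetProj_sq hA s)
  have hP : ∑ i ∈ t, ‖A (b.finsetProj s (f i))‖ ^ 2 ≤ 1 :=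
    (b.sum_norm_apply_sq_le_of_hasSum _ hf t (b.hasSum_norm_comp_finsetProj_sq A s)).trans
      (sum_le_hasSum s (fun _ _ => by positivity) hA)
  have h1 : ∑ i ∈ t, ‖A (e i)‖ ^ 2 ≤ 1 := b.sum_norm_apply_sq_le_of_hasSum A he t hA
  calc _ ≤ √(1 - ∑ j ∈ s, ‖A (b j)‖ ^ 2) * √1 + √1 * √(1 - ∑ j ∈ s, ‖A (b j)‖ ^ 2) := by
        gcongr
        · exact (A.sum_norm_inner_adjoint_comp_self_le _ _ t).trans <| mul_le_mul
            (Real.sqrt_le_sqrt (hQ he)) (Real.sqrt_le_sqrt hP) (by positivity) (by positivity)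
        · exact (A.sum_norm_inner_adjoint_comp_self_le _ _ t).trans <| mul_le_mul
            (Real.sqrt_le_sqrt h1) (Real.sqrt_le_sqrt (hQ hf)) (by positivity) (by positivity)
    _ = 2 * √(1 - ∑ j ∈ s, ‖A (b j)‖ ^ 2) := by simp only [Real.sqrt_one]; ring

theorem sum_norm_inner_sub_le (b : HilbertBasis ι 𝕜 E) {A B : E →L[𝕜] E}
    (hA : HasSum (fun j => ‖A (b j)‖ ^ 2) 1) (hB : HasSum (fun j => ‖B (b j)‖ ^ 2) 1)
    (s : Finset ι) {κ : Type*} {e f : κ → E} (he : Orthonormal 𝕜 e) (hf : Orthonormal 𝕜 f)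
    (t : Finset κ) :
    ∑ i ∈ t, ‖⟪e i, (A.adjoint ∘L A - B.adjoint ∘L B) (f i)⟫_𝕜‖
      ≤ ∑ a ∈ s, ∑ c ∈ s, ‖⟪b a, (A.adjoint ∘L A - B.adjoint ∘L B) (b c)⟫_𝕜‖
        + 2 * √(1 - ∑ j ∈ s, ‖A (b j)‖ ^ 2) + 2 * √(1 - ∑ j ∈ s, ‖B (b j)‖ ^ 2) := by
  set P := b.finsetProj s
  set σ := A.adjoint ∘L A
  set τ := B.adjoint ∘L B
  have split (x y : E) : ‖⟪x, (σ - τ) y⟫_𝕜‖ ≤ ‖⟪P x, (σ - τ) (P y)⟫_𝕜‖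
      + (‖⟪(1 - P) x, σ (P y)⟫_𝕜‖ + ‖⟪x, σ ((1 - P) y)⟫_𝕜‖)
      + (‖⟪(1 - P) x, τ (P y)⟫_𝕜‖ + ‖⟪x, τ ((1 - P) y)⟫_𝕜‖) := by
    have : ⟪x, (σ - τ) y⟫_𝕜 = ⟪P x, (σ - τ) (P y)⟫_𝕜
        + (⟪(1 - P) x, σ (P y)⟫_𝕜 + ⟪x, σ ((1 - P) y)⟫_𝕜)
        - (⟪(1 - P) x, τ (P y)⟫_𝕜 + ⟪x, τ ((1 - P) y)⟫_𝕜) := by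
      simp only [sub_apply, one_apply_eq_self, map_sub, inner_sub_left, inner_sub_right]
      ring
    rw [this]
    exact (norm_sub_le _ _).trans <| add_le_add
      ((norm_add_le _ _).trans (add_le_add_right (norm_add_le _ _) _)) (norm_add_le _ _)
  calc _ ≤ ∑ i ∈ t, (‖⟪P (e i), (σ - τ) (P (f i))⟫_𝕜‖
          + (‖⟪(1 - P) (e i), σ (P (f i))⟫_𝕜‖ + ‖⟪e i, σ ((1 - P) (f i))⟫_𝕜‖)
          + (‖⟪(1 - P) (e i), τ (P (f i))⟫_𝕜‖ + ‖⟪e i, τ ((1 - P) (f i))⟫_𝕜‖)) :=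
        Finset.sum_le_sum fun i _ => split _ _
    _ ≤ _ := by
        simp only [Finset.sum_add_distrib]
        gcongr
        exacts [b.sum_norm_inner_finsetProj_le _ s he hf t,
          b.sum_norm_inner_offBlock_le hA s he hf t, b.sum_norm_inner_offBlock_le hB s he hf t]

end HilbertBasis

theorem tendsto_of_forall_le_of_tendsto_of_tendsto {α β R : Type*} [LinearOrder R]
    [TopologicalSpace R] [OrderTopology R] {la : Filter α} {lb : Filter β} [lb.NeBot]
    {f : α → R} {g : α → β → R} {h : β → R} {c : R} (hf : ∀ a, c ≤ f a)
    (hfg : ∀ a b, f a ≤ g a b) (hg : ∀ b, Tendsto (g · b) la (𝓝 (h b)))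
    (hh : Tendsto h lb (𝓝 c)) : Tendsto f la (𝓝 c) := by
  refine tendsto_order.2 ⟨fun d hd => .of_forall fun a => hd.trans_le (hf a), fun d hd => ?_⟩
  obtain ⟨b, hb⟩ := (hh.eventually (gt_mem_nhds hd)).exists
  exact ((hg b).eventually (gt_mem_nhds hb)).mono fun a ha => (hfg a b).trans_lt ha

section Complex

variable {E : Type*} [NormedAddCommGroup E] [InnerProductSpace ℂ E]

theorem opTraceNorm_nonneg (T : E →L[ℂ] E) : 0 ≤ opTraceNorm T :=
  Real.sSup_nonneg fun _ ⟨_, _, _, _, _, hs⟩ => hs ▸ Finset.sum_nonneg fun _ _ => norm_nonneg _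

theorem opTraceNorm_le {T : E →L[ℂ] E} {C : ℝ} (hC : 0 ≤ C)
    (h : ∀ (m : ℕ) (e f : Fin m → E), Orthonormal ℂ e → Orthonormal ℂ f →
      ∑ i, ‖⟪e i, T (f i)⟫_ℂ‖ ≤ C) :
    opTraceNorm T ≤ C :=
  Real.sSup_le (fun _ ⟨m, e, f, he, hf, hs⟩ => hs ▸ h m e f he hf) hC

-- `opTrace` is a `tsum`, which vanishes on non-summable series.
theorem hasSum_of_opTrace_eq_one {b : HilbertBasis ℕ ℂ E} {σ : E →L[ℂ] E}
    (h : opTrace b σ = 1) : HasSum (fun n => (⟪b n, σ (b n)⟫_ℂ).re) 1 := by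
  have hs : Summable fun n => (⟪b n, σ (b n)⟫_ℂ).re := by
    by_contra hs
    rw [opTrace, tsum_eq_zero_of_not_summable hs] at h
    exact zero_ne_one h
  exact h ▸ hs.hasSum

end Complex

theorem ContinuousLinearMap.IsPositive.exists_eq_adjoint_comp_self {σ : H →L[ℂ] H}
    (hσ : σ.IsPositive) : ∃ A : H →L[ℂ] H, σ = A.adjoint ∘L A := by
  obtain ⟨A, rfl⟩ := CStarAlgebra.nonneg_iff_eq_star_mul_self.1 (σ.nonneg_iff_isPositive.2 hσ)
  exact ⟨A, by rw [ContinuousLinearMap.star_eq_adjoint, ContinuousLinearMap.mul_def]⟩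

theorem opTraceNorm_sub_le {ι : Type*} (b : HilbertBasis ι ℂ H) {σ τ : H →L[ℂ] H}
    (hσ : σ.IsPositive) (hτ : τ.IsPositive) (hσ1 : HasSum (fun j => (⟪b j, σ (b j)⟫_ℂ).re) 1)
    (hτ1 : HasSum (fun j => (⟪b j, τ (b j)⟫_ℂ).re) 1) (s : Finset ι) :
    opTraceNorm (σ - τ) ≤ ∑ a ∈ s, ∑ c ∈ s, ‖⟪b a, (σ - τ) (b c)⟫_ℂ‖
      + 2 * √(1 - ∑ j ∈ s, (⟪b j, σ (b j)⟫_ℂ).re) + 2 * √(1 - ∑ j ∈ s, (⟪b j, τ (b j)⟫_ℂ).re) := by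
  obtain ⟨A, rfl⟩ := hσ.exists_eq_adjoint_comp_self
  obtain ⟨B, rfl⟩ := hτ.exists_eq_adjoint_comp_self
  have hnorm (C : H →L[ℂ] H) (x : H) : (⟪x, (C.adjoint ∘L C) x⟫_ℂ).re = ‖C x‖ ^ 2 :=
    (C.apply_norm_sq_eq_inner_adjoint_right x).symm
  simp only [hnorm] at hσ1 hτ1 ⊢
  exact opTraceNorm_le (by positivity) fun m e f he hf =>
    b.sum_norm_inner_sub_le hσ1 hτ1 s he hf Finset.univ

/-- On the set of density operators of a separable Hilbert space, weak convergence implies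
trace-norm convergence (Holevo, Lemma 11.1). -/
theorem weak_convergence_implies_traceNorm_convergence (b : HilbertBasis ℕ ℂ H)
    (ρseq : ℕ → H →L[ℂ] H) (ρ : H →L[ℂ] H)
    (hpos : ∀ n, (ρseq n).IsPositive) (hρpos : ρ.IsPositive)
    (htr : ∀ n, opTrace b (ρseq n) = 1) (hρtr : opTrace b ρ = 1)
    (hweak : ∀ ψ φ : H, Filter.Tendsto (fun n => (inner ℂ ψ ((ρseq n) φ) : ℂ))
      Filter.atTop (nhds (inner ℂ ψ (ρ φ)))) :
    Filter.Tendsto (fun n => opTraceNorm (ρseq n - ρ)) Filter.atTop (nhds 0) := by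
  set tail : (H →L[ℂ] H) → Finset ℕ → ℝ := fun σ s => 1 - ∑ j ∈ s, (⟪b j, σ (b j)⟫_ℂ).re
  have hentry (a c : ℕ) : Tendsto (fun n => ‖⟪b a, (ρseq n - ρ) (b c)⟫_ℂ‖) atTop (𝓝 0) := by
    simpa [inner_sub_right] using ((hweak (b a) (b c)).sub_const ⟪b a, ρ (b c)⟫_ℂ).norm
  have htail (s : Finset ℕ) : Tendsto (fun n => tail (ρseq n) s) atTop (𝓝 (tail ρ s)) :=
    tendsto_const_nhds.sub <| tendsto_finsetSum s fun j _ =>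
      (Complex.continuous_re.tendsto _).comp (hweak (b j) (b j))
  have hρ1 := hasSum_of_opTrace_eq_one hρtr
  refine tendsto_of_forall_le_of_tendsto_of_tendsto (lb := atTop) (h := fun s => 4 * √(tail ρ s))
    (fun n => opTraceNorm_nonneg _)
    (fun n s => opTraceNorm_sub_le b (hpos n) hρpos (hasSum_of_opTrace_eq_one (htr n)) hρ1 s)
    (fun s => ?_) ?_
  · have hlim := ((tendsto_finsetSum s fun a _ => tendsto_finsetSum s fun c _ => hentry a c).add
      (((Real.continuous_sqrt.tendsto _).comp (htail s)).const_mul 2)).add_const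
      (2 * √(tail ρ s))
    rwa [Finset.sum_const_zero, Finset.sum_const_zero, zero_add, ← add_mul, two_add_two_eq_four]
      at hlim
  · have htail0 : Tendsto (tail ρ) atTop (𝓝 (1 - 1)) := tendsto_const_nhds.sub hρ1
    rw [sub_self] at htail0
    simpa using ((Real.continuous_sqrt.tendsto 0).comp htail0).const_mul 4
end
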